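/- Let f, g be strictly positive integrable random variables with E f = E g = 1, let G ⊆ F be a sub-σ-algebra and A ∈ G. Define the pasting f ⊗_A g := f on A^c and f ⊗_A g := E[f|G]·g/E[g|G] on A. Then f ⊗_A g is strictly positive, integrable, satisfies E[f ⊗_A g] = 1, and E[f ⊗_A g | G] = E[f | G] almost surely. -/

import Mathlib

/-! On `Aᶜ` the pasting is `f`; on `A` it is `g` times the `G`-measurable factor
`E[f|G] / E[g|G]`, which conditioning on `G` pulls out, turning `E[g|G]` back into `E[f|G]`.
Hence `E[f ⊗_A g | G] = E[f|G]`, and taking expectations gives `E[f ⊗_A g] = E f = 1`.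
The one delicate point is the integrability of `g · E[f|G] / E[g|G]` on `A`, which is needed
before the pull-out property applies: it comes from the identity `∫⁻ X H = ∫⁻ E[X|G] H` for
nonnegative `X` and `G`-measurable `H`, whose right side here is `∫_A E[f|G] < ∞`. -/

open MeasureTheory

open scoped ENNReal

namespace MeasureTheory

variable {Ω : Type*} {m mΩ : MeasurableSpace Ω} {μ : Measure Ω}

lemma lintegral_mul_condLExp (hm : m ≤ mΩ) [SigmaFinite (μ.trim hm)] {H X : Ω → ℝ≥0∞}
    (hH : Measurable[m] H) (hX : AEMeasurable X μ) :
    ∫⁻ ω, X ω * H ω ∂μ = ∫⁻ ω, μ⁻[X|m] ω * H ω ∂μ := by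
  -- `H` is `m`-measurable, so only the traces on `m` of the measures `X μ` and `E[X|m] μ` matter.
  have htrim : (μ.withDensity X).trim hm = (μ.withDensity (μ⁻[X|m])).trim hm := by
    refine @Measure.ext _ m _ _ fun s hs => ?_
    rw [trim_measurableSet_eq hm hs, trim_measurableSet_eq hm hs, withDensity_apply _ (hm s hs),
      withDensity_apply _ (hm s hs), setLIntegral_condLExp hm _ _ hs]
  have hH' : AEMeasurable H μ := (hH.mono hm le_rfl).aemeasurable
  calc ∫⁻ ω, X ω * H ω ∂μ
      = ∫⁻ ω, H ω ∂(μ.withDensity X).trim hm := by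
        rw [lintegral_trim hm hH, lintegral_withDensity_eq_lintegral_mul₀ hX hH']; rfl
    _ = ∫⁻ ω, H ω ∂(μ.withDensity (μ⁻[X|m])).trim hm := by rw [htrim]
    _ = ∫⁻ ω, μ⁻[X|m] ω * H ω ∂μ := by
        rw [lintegral_trim hm hH,
          lintegral_withDensity_eq_lintegral_mul₀ (measurable_condLExp' m μ X).aemeasurable hH']
        rfl

lemma condExp_pos (hm : m ≤ mΩ) [SigmaFinite (μ.trim hm)] {f : Ω → ℝ} (hf : Integrable f μ)
    (hf_pos : ∀ᵐ ω ∂μ, 0 < f ω) : ∀ᵐ ω ∂μ, 0 < μ[f | m] ω := by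
  set S := μ[f | m] ⁻¹' Set.Iic 0
  have hS : MeasurableSet[m] S := stronglyMeasurable_condExp.measurable measurableSet_Iic
  have hf_nonneg : 0 ≤ᵐ[μ.restrict S] f := ae_restrict_of_ae (hf_pos.mono fun _ h => h.le)
  have hint : ∫ ω in S, f ω ∂μ = 0 := by
    refine le_antisymm ?_ (integral_nonneg_of_ae hf_nonneg)
    rw [← setIntegral_condExp hm hf hS]
    exact setIntegral_nonpos (hm S hS) fun _ h => h
  have hf_zero : f =ᵐ[μ.restrict S] 0 :=
    (integral_eq_zero_iff_of_nonneg_ae hf_nonneg hf.restrict).mp hint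
  have : μ.restrict S = 0 := by
    rw [← ae_eq_bot, ← Filter.eventually_false_iff_eq_bot]
    filter_upwards [hf_zero, ae_restrict_of_ae hf_pos] with ω h0 hpos
    exact hpos.ne' h0
  simp_rw [ae_iff, not_lt]
  exact Measure.restrict_eq_zero.mp this

lemma integrable_mul_of_integrable_condExp_mul (hm : m ≤ mΩ) [SigmaFinite (μ.trim hm)]
    {g h : Ω → ℝ} (hg : Integrable g μ) (hg_nonneg : 0 ≤ᵐ[μ] g) (hh : StronglyMeasurable[m] h)
    (hh_nonneg : 0 ≤ᵐ[μ] h) (hgh : Integrable (μ[g | m] * h) μ) : Integrable (g * h) μ := by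
  refine ⟨hg.1.mul (hh.mono hm).aestronglyMeasurable, ?_⟩
  have hcg_nonneg : 0 ≤ᵐ[μ] μ[g | m] := condExp_nonneg hg_nonneg
  rw [hasFiniteIntegral_iff_ofReal (hg_nonneg.mul_nonneg hh_nonneg)]
  calc ∫⁻ ω, ENNReal.ofReal (g ω * h ω) ∂μ
      = ∫⁻ ω, ENNReal.ofReal (g ω) * ENNReal.ofReal (h ω) ∂μ := by
        refine lintegral_congr_ae ?_
        filter_upwards [hg_nonneg] with ω hω using ENNReal.ofReal_mul hω
    _ = ∫⁻ ω, μ⁻[fun ω => ENNReal.ofReal (g ω)|m] ω * ENNReal.ofReal (h ω) ∂μ :=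
        lintegral_mul_condLExp hm hh.measurable.ennreal_ofReal hg.aemeasurable.ennreal_ofReal
    _ = ∫⁻ ω, ENNReal.ofReal (μ[g | m] ω * h ω) ∂μ := by
        refine lintegral_congr_ae ?_
        filter_upwards [condLExp_ofReal m hg hg_nonneg, hcg_nonneg] with ω hω hω'
        rw [hω, ENNReal.ofReal_mul hω']
    _ < ∞ := (hasFiniteIntegral_iff_ofReal (hcg_nonneg.mul_nonneg hh_nonneg)).mp hgh.2

/-- The pasting `f ⊗_A g` of `f` and `g` along `A`. -/
noncomputable def pasting (μ : Measure Ω) (m : MeasurableSpace Ω) (A : Set Ω) (f g : Ω → ℝ) :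
    Ω → ℝ :=
  Aᶜ.indicator f + A.indicator fun ω => μ[f | m] ω * g ω / μ[g | m] ω

section Pasting

variable {A : Set Ω} {f g : Ω → ℝ}

lemma pasting_eq_add_mul :
    pasting μ m A f g = Aᶜ.indicator f + g * A.indicator (μ[f | m] / μ[g | m]) := by
  ext ω
  by_cases hω : ω ∈ A <;> simp [pasting, hω, mul_div_assoc, mul_comm]

lemma pasting_pos (hm : m ≤ mΩ) [SigmaFinite (μ.trim hm)] (hf : Integrable f μ)
    (hg : Integrable g μ) (hf_pos : ∀ᵐ ω ∂μ, 0 < f ω) (hg_pos : ∀ᵐ ω ∂μ, 0 < g ω) :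
    ∀ᵐ ω ∂μ, 0 < pasting μ m A f g ω := by
  filter_upwards [hf_pos, hg_pos, condExp_pos hm hf hf_pos, condExp_pos hm hg hg_pos]
    with ω hf hg hcf hcg
  by_cases hω : ω ∈ A
  · simpa [pasting, hω] using div_pos (mul_pos hcf hg) hcg
  · simpa [pasting, hω] using hf

lemma condExp_mul_indicator_condExp_div (hm : m ≤ mΩ) [SigmaFinite (μ.trim hm)]
    (hg : Integrable g μ) (hg_pos : ∀ᵐ ω ∂μ, 0 < g ω) :
    μ[g | m] * A.indicator (μ[f | m] / μ[g | m]) =ᵐ[μ] A.indicator (μ[f | m]) := by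
  filter_upwards [condExp_pos hm hg hg_pos] with ω hcg
  by_cases hω : ω ∈ A <;> simp [hω, mul_div_cancel₀ _ hcg.ne']

lemma stronglyMeasurable_indicator_condExp_div (hA : MeasurableSet[m] A) :
    StronglyMeasurable[m] (A.indicator (μ[f | m] / μ[g | m])) :=
  ((stronglyMeasurable_condExp.measurable.div stronglyMeasurable_condExp.measurable).indicator
    hA).stronglyMeasurable

lemma integrable_mul_indicator_condExp_div (hm : m ≤ mΩ) [SigmaFinite (μ.trim hm)]
    (hA : MeasurableSet[m] A) (hf_nonneg : 0 ≤ᵐ[μ] f) (hg : Integrable g μ)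
    (hg_pos : ∀ᵐ ω ∂μ, 0 < g ω) : Integrable (g * A.indicator (μ[f | m] / μ[g | m])) μ := by
  have hr_nonneg : 0 ≤ᵐ[μ] A.indicator (μ[f | m] / μ[g | m]) := by
    filter_upwards [condExp_nonneg hf_nonneg (m := m), condExp_pos hm hg hg_pos] with ω hcf hcg
    exact Set.indicator_nonneg (fun _ _ => div_nonneg hcf hcg.le) ω
  exact integrable_mul_of_integrable_condExp_mul hm hg (hg_pos.mono fun _ h => h.le)
    (stronglyMeasurable_indicator_condExp_div hA) hr_nonneg
    ((integrable_condExp.indicator (hm A hA)).congr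
      (condExp_mul_indicator_condExp_div hm hg hg_pos).symm)

lemma integrable_pasting (hm : m ≤ mΩ) [SigmaFinite (μ.trim hm)] (hA : MeasurableSet[m] A)
    (hf : Integrable f μ) (hg : Integrable g μ) (hf_nonneg : 0 ≤ᵐ[μ] f)
    (hg_pos : ∀ᵐ ω ∂μ, 0 < g ω) : Integrable (pasting μ m A f g) μ := by
  rw [pasting_eq_add_mul]
  exact (hf.indicator (hm A hA).compl).add
    (integrable_mul_indicator_condExp_div hm hA hf_nonneg hg hg_pos)

lemma condExp_pasting (hm : m ≤ mΩ) [SigmaFinite (μ.trim hm)] (hA : MeasurableSet[m] A)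
    (hf : Integrable f μ) (hg : Integrable g μ) (hf_nonneg : 0 ≤ᵐ[μ] f)
    (hg_pos : ∀ᵐ ω ∂μ, 0 < g ω) : μ[pasting μ m A f g | m] =ᵐ[μ] μ[f | m] := by
  have hgr := integrable_mul_indicator_condExp_div hm hA hf_nonneg hg hg_pos
  rw [pasting_eq_add_mul]
  filter_upwards [condExp_add (hf.indicator (hm A hA).compl) hgr m,
    condExp_indicator hf hA.compl,
    condExp_mul_of_stronglyMeasurable_right (stronglyMeasurable_indicator_condExp_div hA) hgr hg,
    condExp_mul_indicator_condExp_div hm hg hg_pos] with ω h_add h_Ac h_gr h_A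
  rw [h_add, Pi.add_apply, h_Ac, h_gr, h_A, Set.indicator_compl_add_self_apply]

lemma integral_pasting (hm : m ≤ mΩ) [SigmaFinite (μ.trim hm)] (hA : MeasurableSet[m] A)
    (hf : Integrable f μ) (hg : Integrable g μ) (hf_nonneg : 0 ≤ᵐ[μ] f)
    (hg_pos : ∀ᵐ ω ∂μ, 0 < g ω) : ∫ ω, pasting μ m A f g ω ∂μ = ∫ ω, f ω ∂μ := by
  rw [← integral_condExp hm, integral_congr_ae (condExp_pasting hm hA hf hg hf_nonneg hg_pos),
    integral_condExp hm]

end Pasting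

end MeasureTheory

theorem pasting_of_densities_general
    {Ω : Type*} {F : MeasurableSpace Ω} (μ : Measure Ω) [IsProbabilityMeasure μ]
    (G : MeasurableSpace Ω) (hG : G ≤ F)
    (A : Set Ω) (hA : MeasurableSet[G] A)
    (f g : Ω → ℝ) (hf : Integrable f μ) (hg : Integrable g μ)
    (hfpos : ∀ᵐ ω ∂μ, 0 < f ω) (hgpos : ∀ᵐ ω ∂μ, 0 < g ω)
    (hfint : ∫ ω, f ω ∂μ = 1)
    (p : Ω → ℝ)
    (hp : p = fun ω => Aᶜ.indicator f ω +
      A.indicator (fun ω' => (μ[f | G]) ω' * g ω' / (μ[g | G]) ω') ω) :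
    (∀ᵐ ω ∂μ, 0 < p ω) ∧ Integrable p μ ∧ (∫ ω, p ω ∂μ = 1) ∧
      (μ[p | G]) =ᵐ[μ] (μ[f | G]) := by
  have hf_nonneg : 0 ≤ᵐ[μ] f := hfpos.mono fun _ h => h.le
  change p = pasting μ G A f g at hp
  subst hp
  exact ⟨pasting_pos hG hf hg hfpos hgpos, integrable_pasting hG hA hf hg hf_nonneg hgpos,
    (integral_pasting hG hA hf hg hf_nonneg hgpos).trans hfint,
    condExp_pasting hG hA hf hg hf_nonneg hgpos⟩

/-- The pasting `f ⊗_A g` of two strictly positive densities along an event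
`A ∈ G` is a strictly positive density whose `G`-conditional expectation
agrees with that of `f`. -/
theorem pasting_of_densities
    {Ω : Type*} {F : MeasurableSpace Ω} (μ : Measure Ω) [IsProbabilityMeasure μ]
    (G : MeasurableSpace Ω) (hG : G ≤ F)
    (A : Set Ω) (hA : MeasurableSet[G] A)
    (f g : Ω → ℝ) (hf : Integrable f μ) (hg : Integrable g μ)
    (hfpos : ∀ᵐ ω ∂μ, 0 < f ω) (hgpos : ∀ᵐ ω ∂μ, 0 < g ω)
    (hfint : ∫ ω, f ω ∂μ = 1) (hgint : ∫ ω, g ω ∂μ = 1)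
    (p : Ω → ℝ)
    (hp : p = fun ω => Aᶜ.indicator f ω +
      A.indicator (fun ω' => (μ[f | G]) ω' * g ω' / (μ[g | G]) ω') ω) :
    (∀ᵐ ω ∂μ, 0 < p ω) ∧ Integrable p μ ∧ (∫ ω, p ω ∂μ = 1) ∧
      (μ[p | G]) =ᵐ[μ] (μ[f | G]) :=
  pasting_of_densities_general μ G hG A hA f g hf hg hfpos hgpos hfint p hp
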